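/- arXiv:2308.01113 — 6 statements merged into one kernel-verified Lean document; each statement's English description precedes it below -/
import Mathlib

section
/- Let c¹, c² ∈ ℝⁿ and define f : ℝⁿ → ℝ² by f(x) = (‖x − c¹‖₂², ‖x − c²‖₂²), where ‖·‖₂ is the Euclidean norm, with feasible set X_ad = ℝⁿ. Then a point x ∈ ℝⁿ is Pareto optimal for f if and only if x lies in the convex hull conv({c¹, c²}) of c¹ and c², i.e., in the line segment joining c¹ and c². -/
open RealInnerProductSpace


/-- For `f(x) = (‖x − c¹‖₂², ‖x − c²‖₂²)` on `ℝⁿ`, a point `x` is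
Pareto optimal (no `y` with `f(y) ≤ f(x)` componentwise and `f(y) ≠ f(x)`)
iff `x ∈ conv({c¹, c²})`, i.e. `x` lies on the segment joining `c¹` and `c²`. -/
theorem pareto_set_two_paraboloids (n : ℕ) (c₁ c₂ : EuclideanSpace ℝ (Fin n))
    (x : EuclideanSpace ℝ (Fin n)) :
    (¬ ∃ y : EuclideanSpace ℝ (Fin n),
        ‖y - c₁‖ ^ 2 ≤ ‖x - c₁‖ ^ 2 ∧ ‖y - c₂‖ ^ 2 ≤ ‖x - c₂‖ ^ 2 ∧
        ¬ (‖y - c₁‖ ^ 2 = ‖x - c₁‖ ^ 2 ∧ ‖y - c₂‖ ^ 2 = ‖x - c₂‖ ^ 2)) ↔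
      x ∈ convexHull ℝ ({c₁, c₂} : Set (EuclideanSpace ℝ (Fin n))) := by
  rw [convexHull_pair]
  constructor
  · -- Pareto ⇒ on the segment: contrapositive via metric projection
    intro h
    by_contra hx
    apply h
    set K := segment ℝ c₁ c₂ with hK
    have hconv : Convex ℝ K := convex_segment c₁ c₂
    have hne : K.Nonempty := ⟨c₁, left_mem_segment ℝ c₁ c₂⟩
    have hcomp : IsComplete K := by
      have : IsCompact K := by
        rw [hK, segment_eq_image]
        exact isCompact_Icc.image
          (((continuous_const.sub continuous_id).smul continuous_const).add
            (continuous_id.smul continuous_const))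
      exact this.isComplete
    obtain ⟨v, hvK, hv⟩ :=
      exists_norm_eq_iInf_of_complete_convex hne hcomp hconv x
    have hproj : ∀ w ∈ K, (inner ℝ (x - v) (w - v) : ℝ) ≤ 0 :=
      (norm_eq_iInf_iff_real_inner_le_zero hconv hvK).mp hv
    have hxv : x ≠ v := fun h => hx (h ▸ hvK)
    have hxvpos : 0 < ‖x - v‖ ^ 2 :=
      pow_pos (norm_pos_iff.mpr (sub_ne_zero.mpr hxv)) 2
    have key : ∀ z, z ∈ K → ‖v - z‖ ^ 2 < ‖x - z‖ ^ 2 := by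
      intro z hz
      have h1 : (inner ℝ (x - v) (z - v) : ℝ) ≤ 0 := hproj z hz
      have hexp : ‖x - z‖ ^ 2 = ‖x - v‖ ^ 2 + 2 * (inner ℝ (x - v) (v - z) : ℝ) + ‖v - z‖ ^ 2 := by
        have : x - z = (x - v) + (v - z) := by abel
        rw [this, ← real_inner_self_eq_norm_sq, ← real_inner_self_eq_norm_sq,
          ← real_inner_self_eq_norm_sq, inner_add_add_self, real_inner_comm (v - z) (x - v)]
        ring
      have h2 : 0 ≤ (inner ℝ (x - v) (v - z) : ℝ) := by
        have : (inner ℝ (x - v) (v - z) : ℝ) = -(inner ℝ (x - v) (z - v) : ℝ) := by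
          rw [← inner_neg_right]; congr 1; abel
        linarith [this ▸ neg_nonneg.mpr h1]
      nlinarith
    exact ⟨v, le_of_lt (key c₁ (left_mem_segment ℝ c₁ c₂)),
      le_of_lt (key c₂ (right_mem_segment ℝ c₁ c₂)),
      fun ⟨h1, _⟩ => absurd h1 (ne_of_lt (key c₁ (left_mem_segment ℝ c₁ c₂)))⟩
  · -- on the segment ⇒ Pareto
    rintro ⟨a, b, ha, hb, hab, rfl⟩
    rintro ⟨y, h1, h2, h3⟩
    set x := a • c₁ + b • c₂
    have hx1 : x - c₁ = b • (c₂ - c₁) := by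
      simp only [x, smul_sub]
      rw [show a = 1 - b by linarith, sub_smul, one_smul]
      abel
    have hx2 : x - c₂ = a • (c₁ - c₂) := by
      simp only [x, smul_sub]
      rw [show b = 1 - a by linarith, sub_smul, one_smul]
      abel
    have hn1 : ‖x - c₁‖ = b * ‖c₂ - c₁‖ := by
      rw [hx1, norm_smul, Real.norm_of_nonneg hb]
    have hn2 : ‖x - c₂‖ = a * ‖c₁ - c₂‖ := by
      rw [hx2, norm_smul, Real.norm_of_nonneg ha]
    have hsum : ‖x - c₁‖ + ‖x - c₂‖ = ‖c₁ - c₂‖ := by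
      rw [hn1, hn2, norm_sub_rev c₂ c₁, ← add_mul, add_comm b a, hab, one_mul]
    have htri : ‖c₁ - c₂‖ ≤ ‖y - c₁‖ + ‖y - c₂‖ := by
      calc ‖c₁ - c₂‖ = ‖(c₁ - y) + (y - c₂)‖ := by abel_nf
        _ ≤ ‖c₁ - y‖ + ‖y - c₂‖ := norm_add_le _ _
        _ = ‖y - c₁‖ + ‖y - c₂‖ := by rw [norm_sub_rev]
    have hy1 : ‖y - c₁‖ ≤ ‖x - c₁‖ := by nlinarith [norm_nonneg (y - c₁), norm_nonneg (x - c₁)]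
    have hy2 : ‖y - c₂‖ ≤ ‖x - c₂‖ := by nlinarith [norm_nonneg (y - c₂), norm_nonneg (x - c₂)]
    have he1 : ‖y - c₁‖ = ‖x - c₁‖ := by linarith
    have he2 : ‖y - c₂‖ = ‖x - c₂‖ := by linarith
    exact h3 ⟨by rw [he1], by rw [he2]⟩
end

section
/- Let f : ℝⁿ → ℝᵏ have differentiable components f₁,…,f_k, and take the feasible set X_ad = ℝⁿ. If x̄ ∈ ℝⁿ is weakly Pareto optimal for f, then 0 ∈ conv({∇f₁(x̄), …, ∇f_k(x̄)}); equivalently, there exists α ∈ ℝᵏ with αᵢ ≥ 0 for all i, Σᵢ₌₁ᵏ αᵢ = 1 and Σᵢ₌₁ᵏ αᵢ ∇fᵢ(x̄) = 0. -/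
/-- If `f : ℝⁿ → ℝᵏ` has differentiable components and
`xb` is weakly Pareto optimal (no `y` with `fᵢ(y) < fᵢ(xb)` for all `i`), then
there exists `α ∈ ℝᵏ` with `αᵢ ≥ 0`, `Σ αᵢ = 1` and `Σ αᵢ ∇fᵢ(xb) = 0`,
i.e. `0 ∈ conv({∇f₁(xb), …, ∇f_k(xb)})`. -/
theorem weakly_pareto_optimal_first_order (n k : ℕ)
    (f : Fin k → EuclideanSpace ℝ (Fin n) → ℝ)
    (hf : ∀ i, Differentiable ℝ (f i))
    (xb : EuclideanSpace ℝ (Fin n))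
    (hpareto : ¬ ∃ y : EuclideanSpace ℝ (Fin n), ∀ i, f i y < f i xb) :
    ∃ α : Fin k → ℝ, (∀ i, 0 ≤ α i) ∧ (∑ i, α i = 1) ∧
      ∑ i, α i • gradient (f i) xb = 0 := by
  set g : Fin k → EuclideanSpace ℝ (Fin n) := fun i => gradient (f i) xb with hg
  -- Step 1: 0 ∈ convexHull ℝ (range g)
  have hmem : (0 : EuclideanSpace ℝ (Fin n)) ∈ convexHull ℝ (Set.range g) := by
    by_contra h0
    obtain ⟨φ, u, hφ0, hφ⟩ := geometric_hahn_banach_point_closed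
      (convex_convexHull ℝ _) ((Set.finite_range g).isClosed_convexHull ℝ) h0
    have hu : 0 < u := by simpa using hφ0
    set v : EuclideanSpace ℝ (Fin n) :=
      -((InnerProductSpace.toDual ℝ (EuclideanSpace ℝ (Fin n))).symm φ) with hv
    have hneg : ∀ i, inner ℝ (g i) v < (0 : ℝ) := by
      intro i
      have h1 : u < φ (g i) := hφ _ (subset_convexHull ℝ _ (Set.mem_range_self i))
      have h2 : inner ℝ (g i) v = -(φ (g i)) := by
        rw [hv, real_inner_comm, inner_neg_left, InnerProductSpace.toDual_symm_apply]
      rw [h2]; linarith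
    -- directional derivative
    have hder : ∀ i, HasDerivAt (fun t : ℝ => f i (xb + t • v)) (inner ℝ (g i) v) 0 := by
      intro i
      have hFD : HasFDerivAt (f i)
          (InnerProductSpace.toDualMap ℝ (EuclideanSpace ℝ (Fin n)) (g i)) xb :=
        hasGradientAt_iff_hasFDerivAt.mp ((hf i).differentiableAt.hasGradientAt)
      have hline : HasDerivAt (fun t : ℝ => xb + t • v) v 0 := by
        simpa using ((hasDerivAt_id (0 : ℝ)).smul_const v).const_add xb
      have hFD' : HasFDerivAt (f i)
          (InnerProductSpace.toDualMap ℝ (EuclideanSpace ℝ (Fin n)) (g i))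
          (xb + (0 : ℝ) • v) := by simpa using hFD
      exact hFD'.comp_hasDerivAt 0 hline
    have hev : ∀ᶠ t in nhdsWithin (0 : ℝ) (Set.Ioi 0), ∀ i, f i (xb + t • v) < f i xb := by
      rw [Filter.eventually_all]
      intro i
      have hslope := hasDerivAt_iff_tendsto_slope.mp (hder i)
      have h1 : ∀ᶠ t in nhdsWithin (0 : ℝ) {0}ᶜ,
          slope (fun t : ℝ => f i (xb + t • v)) 0 t < 0 :=
        hslope.eventually (eventually_lt_nhds (hneg i))
      have h2 : ∀ᶠ t in nhdsWithin (0 : ℝ) (Set.Ioi 0),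
          slope (fun t : ℝ => f i (xb + t • v)) 0 t < 0 :=
        h1.filter_mono (nhdsWithin_mono _ (fun t ht => ne_of_gt ht))
      filter_upwards [h2, self_mem_nhdsWithin] with t hts (ht : t ∈ Set.Ioi 0)
      have ht0 : (0 : ℝ) < t := ht
      rw [slope_def_field] at hts
      have h3 : (f i (xb + t • v) - f i (xb + (0:ℝ) • v)) / (t - 0) < 0 := hts
      simp only [zero_smul, add_zero, sub_zero] at h3
      rcases div_neg_iff.mp h3 with ⟨h4, h5⟩ | ⟨h4, _⟩
      · linarith
      · linarith
    obtain ⟨t, ht⟩ := hev.exists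
    exact hpareto ⟨xb + t • v, ht⟩
  -- Step 2: extract weights
  rw [convexHull_range_eq_exists_affineCombination] at hmem
  obtain ⟨s, w, hw0, hw1, hws⟩ := hmem
  refine ⟨fun i => if i ∈ s then w i else 0, fun i => ?_, ?_, ?_⟩
  · dsimp only; split_ifs with h; exacts [hw0 _ h, le_rfl]
  · simp only [Finset.sum_ite_mem, Finset.univ_inter]; exact hw1
  · rw [Finset.affineCombination_eq_linear_combination s g w hw1] at hws
    simpa only [ite_smul, zero_smul, Finset.sum_ite_mem, Finset.univ_inter] using hws
end

section
/- Let X be a real Hilbert space, let X_ad ⊆ X be a nonempty convex closed set, and let f₁,…,f_k : X → ℝ be Fréchet differentiable with gradients ∇fᵢ(x) ∈ X. If x̄ ∈ X_ad is weakly Pareto optimal for f = (f₁,…,f_k) on X_ad, then there exists α ∈ ℝᵏ with αᵢ ≥ 0 for all i, Σᵢ₌₁ᵏ αᵢ = 1, and Σᵢ₌₁ᵏ αᵢ ⟨∇fᵢ(x̄), x − x̄⟩_X ≥ 0 for all x ∈ X_ad. -/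
open scoped RealInnerProductSpace

private lemma aux_eventual_decrease (φ : ℝ → ℝ) (φ' : ℝ) (h : HasDerivAt φ φ' 0)
    (hneg : φ' < 0) : ∀ᶠ t in nhdsWithin 0 (Set.Ioi 0), φ t < φ 0 := by
  have hs := hasDerivAt_iff_tendsto_slope.mp h
  have h1 : ∀ᶠ t in nhdsWithin 0 {(0:ℝ)}ᶜ, slope φ 0 t < 0 :=
    hs (Iio_mem_nhds hneg)
  have h2 : ∀ᶠ t in nhdsWithin 0 (Set.Ioi 0), slope φ 0 t < 0 :=
    h1.filter_mono (nhdsWithin_mono _ (fun t ht => ne_of_gt ht))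
  filter_upwards [h2, self_mem_nhdsWithin] with t ht ht0
  have : (φ t - φ 0) / t < 0 := by simpa [slope_def_field, div_eq_iff] using ht
  have ht0' : (0:ℝ) < t := ht0
  rcases div_neg_iff.mp this with ⟨h1,h2⟩ | ⟨h1,h2⟩ <;> linarith

/-- Let `X` be a real Hilbert space, `Xad ⊆ X` nonempty, convex
and closed, and `f₁,…,f_k : X → ℝ` Fréchet differentiable. If `xb ∈ Xad` is
weakly Pareto optimal on `Xad`, then there exists `α ∈ ℝᵏ` with `αᵢ ≥ 0`,
`Σ αᵢ = 1` and `Σᵢ αᵢ ⟨∇fᵢ(xb), x − xb⟩ ≥ 0` for all `x ∈ Xad`. -/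
theorem weakly_pareto_optimal_variational_inequality
    (X : Type*) [NormedAddCommGroup X] [InnerProductSpace ℝ X] [CompleteSpace X]
    (Xad : Set X) (hne : Xad.Nonempty) (hconv : Convex ℝ Xad) (hclosed : IsClosed Xad)
    (k : ℕ) (f : Fin k → X → ℝ) (hf : ∀ i, Differentiable ℝ (f i))
    (xb : X) (hxb : xb ∈ Xad)
    (hpareto : ¬ ∃ y ∈ Xad, ∀ i, f i y < f i xb) :
    ∃ α : Fin k → ℝ, (∀ i, 0 ≤ α i) ∧ (∑ i, α i = 1) ∧
      ∀ x ∈ Xad, 0 ≤ ∑ i, α i * ⟪gradient (f i) xb, x - xb⟫ := by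
  obtain rfl | hk := Nat.eq_zero_or_pos k
  · exact absurd ⟨xb, hxb, fun i => i.elim0⟩ hpareto
  set g : Fin k → X := fun i => gradient (f i) xb with hg_def
  -- Step 1: no feasible strictly descent point
  have key : ∀ x ∈ Xad, ¬ ∀ i, ⟪g i, x - xb⟫ < 0 := by
    intro x hx hneg
    set d := x - xb with hd_def
    have hderiv : ∀ i, HasDerivAt (fun t : ℝ => f i (xb + t • d)) ⟪g i, d⟫ 0 := by
      intro i
      have hc : HasDerivAt (fun t : ℝ => xb + t • d) d 0 := by
        simpa using ((hasDerivAt_id (0:ℝ)).smul_const d).const_add xb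
      have hgr : HasFDerivAt (f i) (InnerProductSpace.toDual ℝ X (g i)) (xb + (0:ℝ) • d) := by
        simpa only [zero_smul, add_zero] using ((hf i) (xb + (0:ℝ) • d)).hasGradientAt.hasFDerivAt
      have := hgr.comp_hasDerivAt 0 hc
      simpa [InnerProductSpace.toDual_apply_apply, Function.comp_def] using this
    have hev : ∀ᶠ t in nhdsWithin 0 (Set.Ioi 0),
        (∀ i, f i (xb + t • d) < f i xb) ∧ t ∈ Set.Ioc (0:ℝ) 1 := by
      refine Filter.Eventually.and ?_ (Filter.eventually_mem_set.mpr (Ioc_mem_nhdsGT_of_mem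
        (by simp [Set.mem_Ico])))
      refine Filter.eventually_all.mpr fun i => ?_
      have := aux_eventual_decrease _ _ (hderiv i) (hneg i)
      simpa using this
    obtain ⟨t, ht, htIoc⟩ := hev.exists
    have hy : xb + t • d ∈ Xad := by
      have h1 : (1 - t) • xb + t • x = xb + t • d := by
        rw [hd_def, smul_sub, sub_smul, one_smul]; abel
      rw [← h1]
      exact hconv hxb hx (by linarith [htIoc.2]) (le_of_lt htIoc.1) (by ring)
    exact hpareto ⟨xb + t • d, hy, ht⟩
  -- Step 2: separation
  set A : Set (Fin k → ℝ) := (fun x => fun i => ⟪g i, x - xb⟫) '' Xad with hA_def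
  set B : Set (Fin k → ℝ) := Set.pi Set.univ (fun _ => Set.Iio (0:ℝ)) with hB_def
  have hAconv : Convex ℝ A := by
    rintro _ ⟨x, hx, rfl⟩ _ ⟨y, hy, rfl⟩ a b ha hb hab
    refine ⟨a • x + b • y, hconv hx hy ha hb hab, ?_⟩
    funext i
    have h1 : a • x + b • y - xb = a • (x - xb) + b • (y - xb) := by
      have hb1 : b = 1 - a := by linarith
      rw [hb1]; module
    simp [h1, inner_add_right, inner_smul_right]
  have hBconv : Convex ℝ B := convex_pi (fun i _ => convex_Iio 0)
  have hBopen : IsOpen B := isOpen_set_pi Set.finite_univ (fun i _ => isOpen_Iio)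
  have hdisj : Disjoint B A := by
    rw [Set.disjoint_left]
    rintro v hvB ⟨x, hx, rfl⟩
    exact key x hx fun i => hvB i (Set.mem_univ i)
  obtain ⟨φ, c, hφB, hφA⟩ := geometric_hahn_banach_open hBconv hBopen hAconv hdisj
  set α : Fin k → ℝ := fun i => φ (Pi.single i 1) with hα_def
  have hφ : ∀ v : Fin k → ℝ, φ v = ∑ i, v i * α i := by
    intro v
    have hv : v = ∑ i, v i • (Pi.single i 1 : Fin k → ℝ) := by
      have : ∀ i, v i • (Pi.single i 1 : Fin k → ℝ) = Pi.single i (v i) := by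
        intro i; rw [← Pi.single_smul, smul_eq_mul, mul_one]
      simp_rw [this]
      exact (Finset.univ_sum_single v).symm
    conv_lhs => rw [hv]
    simp [map_sum, map_smul, smul_eq_mul, hα_def]
  set S : ℝ := ∑ i, α i with hS_def
  -- c ≤ 0 (since 0 ∈ A)
  have h0A : (fun i => ⟪g i, xb - xb⟫) ∈ A := ⟨xb, hxb, rfl⟩
  have hc_le : c ≤ 0 := by
    have := hφA _ h0A
    simpa [hφ] using this
  -- const (-1) ∈ B
  have hm1B : (fun _ : Fin k => (-1:ℝ)) ∈ B := fun i _ => by norm_num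
  have hSpos : 0 < S := by
    have := hφB _ hm1B
    rw [hφ] at this
    simp only [neg_one_mul, Finset.sum_neg_distrib] at this
    linarith
  -- 0 ≤ c
  have hc_ge : 0 ≤ c := by
    by_contra hc
    push_neg at hc
    have hδ : ∀ δ : ℝ, 0 < δ → -δ * S < c := by
      intro δ hδ
      have hmem : (fun _ : Fin k => -δ) ∈ B := fun i _ => by simpa using hδ
      have := hφB _ hmem
      rw [hφ] at this
      calc -δ * S = ∑ i, -δ * α i := by rw [Finset.mul_sum]
        _ < c := this
    have h1 := hδ (-c / (2 * S)) (div_pos (by linarith) (by positivity))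
    have h2 : -(-c / (2 * S)) * S = c / 2 := by
      field_simp
    linarith
  -- each α i ≥ 0
  have hαnn : ∀ i, 0 ≤ α i := by
    intro i
    by_contra h
    push_neg at h
    set t : ℝ := (|S| + 1) / (-α i) with ht_def
    have hαi : (0:ℝ) < -α i := by linarith
    have ht : 0 < t := div_pos (by positivity) hαi
    have hvB : (fun j => (-1:ℝ) - t * (Pi.single i 1 : Fin k → ℝ) j) ∈ B := by
      intro j _
      by_cases hj : j = i <;> simp [hj, Pi.single_apply] <;> nlinarith
    have hlt := hφB _ hvB
    rw [hφ] at hlt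
    have hsum : ∑ j, ((-1:ℝ) - t * (Pi.single i 1 : Fin k → ℝ) j) * α j = -S - t * α i := by
      simp_rw [sub_mul, neg_one_mul, Finset.sum_sub_distrib, Finset.sum_neg_distrib,
        mul_assoc]
      rw [← Finset.mul_sum]
      have hsingle : ∑ j, (Pi.single i 1 : Fin k → ℝ) j * α j = α i := by
        simp [Pi.single_apply, ite_mul]
      rw [hsingle]
    rw [hsum] at hlt
    have htα : t * α i = -(|S| + 1) := by
      rw [ht_def]
      rw [div_mul_eq_mul_div, div_eq_iff hαi.ne']; ring
    have habs : -|S| ≤ -S := neg_le_neg (le_abs_self S)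
    linarith
  -- conclude
  refine ⟨fun i => α i / S, fun i => div_nonneg (hαnn i) hSpos.le, ?_, ?_⟩
  · rw [← Finset.sum_div, ← hS_def, div_self hSpos.ne']
  · intro x hx
    have huA : (fun i => ⟪g i, x - xb⟫) ∈ A := ⟨x, hx, rfl⟩
    have h1 := hφA _ huA
    rw [hφ] at h1
    have h2 : 0 ≤ ∑ i, ⟪g i, x - xb⟫ * α i := le_trans hc_ge h1
    have h3 : ∑ i, α i / S * ⟪g i, x - xb⟫ = (∑ i, ⟪g i, x - xb⟫ * α i) / S := by
      rw [Finset.sum_div]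
      congr 1
      funext i
      ring
    rw [show (fun i => gradient (f i) xb) = g from rfl] at *
    calc (0:ℝ) ≤ (∑ i, ⟪g i, x - xb⟫ * α i) / S := div_nonneg h2 hSpos.le
      _ = ∑ i, α i / S * ⟪g i, x - xb⟫ := h3.symm
end

section
/- Let f₁,…,f_k : ℝⁿ → ℝ be convex functions and let X_ad ⊆ ℝⁿ be a nonempty convex set. If x̄ ∈ X_ad is weakly Pareto optimal for f = (f₁,…,f_k) on X_ad, then there exists α ∈ ℝᵏ with αᵢ ≥ 0 for all i and Σᵢ₌₁ᵏ αᵢ = 1 such that x̄ minimizes the weighted sum x ↦ Σᵢ₌₁ᵏ αᵢ fᵢ(x) over X_ad. In other words, for convex objectives every weakly Pareto optimal point is obtained by the weighted sum method. -/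
/-- If `f₁,…,f_k : ℝⁿ → ℝ` are convex, `Xad ⊆ ℝⁿ` is nonempty and
convex, and `xb ∈ Xad` is weakly Pareto optimal on `Xad`, then there exist
weights `αᵢ ≥ 0` with `Σ αᵢ = 1` such that `xb` minimizes the weighted sum
`x ↦ Σᵢ αᵢ fᵢ(x)` over `Xad`. -/
theorem convex_weakly_pareto_is_weighted_sum_minimizer (n k : ℕ)
    (f : Fin k → EuclideanSpace ℝ (Fin n) → ℝ)
    (hconv : ∀ i, ConvexOn ℝ Set.univ (f i))
    (Xad : Set (EuclideanSpace ℝ (Fin n))) (hne : Xad.Nonempty) (hXconv : Convex ℝ Xad)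
    (xb : EuclideanSpace ℝ (Fin n)) (hxb : xb ∈ Xad)
    (hpareto : ¬ ∃ y ∈ Xad, ∀ i, f i y < f i xb) :
    ∃ α : Fin k → ℝ, (∀ i, 0 ≤ α i) ∧ (∑ i, α i = 1) ∧
      ∀ x ∈ Xad, ∑ i, α i * f i xb ≤ ∑ i, α i * f i x := by
  obtain ⟨x₀, hx₀⟩ := hne
  rcases Nat.eq_zero_or_pos k with hk | hk
  · exact absurd ⟨x₀, hx₀, fun i => (hk ▸ i).elim0⟩ hpareto
  set A : Set (Fin k → ℝ) := {z | ∃ x ∈ Xad, ∀ i, f i x - f i xb < z i} with hA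
  have hAconv : Convex ℝ A := by
    rintro z ⟨x, hx, hz⟩ w ⟨y, hy, hw⟩ a b ha hb hab
    refine ⟨a • x + b • y, hXconv hx hy ha hb hab, fun i => ?_⟩
    have h1 := (hconv i).2 (Set.mem_univ x) (Set.mem_univ y) ha hb hab
    have hz' := hz i; have hw' := hw i
    have hid : a * f i xb + b * f i xb = f i xb := by rw [← add_mul, hab, one_mul]
    simp only [Pi.add_apply, Pi.smul_apply, smul_eq_mul] at *
    rcases ha.lt_or_eq with ha' | ha'
    · nlinarith [mul_lt_mul_of_pos_left hz' ha', mul_le_mul_of_nonneg_left hw'.le hb]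
    · rcases hb.lt_or_eq with hb' | hb'
      · nlinarith [mul_lt_mul_of_pos_left hw' hb', mul_le_mul_of_nonneg_left hz'.le ha]
      · exfalso; rw [← ha', ← hb'] at hab; simp at hab
  have hAopen : IsOpen A := by
    have : A = ⋃ x ∈ Xad, ⋂ i, {z : Fin k → ℝ | f i x - f i xb < z i} := by
      ext z; simp [hA]
    rw [this]
    refine isOpen_biUnion fun x _ => isOpen_iInter_of_finite fun i => ?_
    exact isOpen_lt continuous_const (continuous_apply i)
  have h0A : (0 : Fin k → ℝ) ∉ A := by
    rintro ⟨x, hx, hz⟩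
    refine hpareto ⟨x, hx, fun i => ?_⟩
    have := hz i; simp at this; linarith
  obtain ⟨g, hg⟩ := geometric_hahn_banach_point_open hAconv hAopen h0A
  have hg0 : ∀ z ∈ A, 0 < g z := by
    intro z hz; have := hg z hz; simpa using this
  set α' : Fin k → ℝ := fun i => g (fun j => if i = j then 1 else 0) with hα'
  have hgz : ∀ z : Fin k → ℝ, g z = ∑ i, z i * α' i := by
    intro z
    conv_lhs => rw [pi_eq_sum_univ z]
    rw [map_sum]
    exact Finset.sum_congr rfl fun i _ => by rw [map_smul, smul_eq_mul]
  have hmem : ∀ x ∈ Xad, ∀ ε > (0:ℝ), (fun i => f i x - f i xb + ε) ∈ A :=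
    fun x hx ε hε => ⟨x, hx, fun i => by dsimp only; linarith⟩
  have hα'nn : ∀ i, 0 ≤ α' i := by
    intro j
    by_contra h
    push_neg at h
    set C : ℝ := ∑ i, (f i x₀ - f i xb + 1) * α' i with hC
    set t : ℝ := max (f j x₀ - f j xb + 1) ((C - (f j x₀ - f j xb + 1) * α' j) / (-α' j)) with ht
    set z : Fin k → ℝ := Function.update (fun i => f i x₀ - f i xb + 1) j t with hz
    have hzA : z ∈ A := by
      refine ⟨x₀, hx₀, fun i => ?_⟩
      rcases eq_or_ne i j with rfl | hij
      · simp only [hz, Function.update_self]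
        calc f i x₀ - f i xb < f i x₀ - f i xb + 1 := by linarith
          _ ≤ t := le_max_left _ _
      · simp only [hz, Function.update_of_ne hij]; linarith
    have hgzval : g z = C + (t - (f j x₀ - f j xb + 1)) * α' j := by
      rw [hgz]
      have step : ∀ i, z i * α' i = (f i x₀ - f i xb + 1) * α' i
          + (if i = j then (t - (f j x₀ - f j xb + 1)) * α' j else 0) := by
        intro i
        rcases eq_or_ne i j with rfl | hij
        · simp only [hz, Function.update_self, if_true, eq_self_iff_true]; ring
        · simp only [hz, Function.update_of_ne hij, if_neg hij, add_zero]
      rw [Finset.sum_congr rfl fun i _ => step i, Finset.sum_add_distrib,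
        Finset.sum_ite_eq' Finset.univ j]
      simp [hC]
    have h1 : (C - (f j x₀ - f j xb + 1) * α' j) / (-α' j) ≤ t := le_max_right _ _
    have hneg : 0 < -α' j := by linarith
    rw [div_le_iff₀ hneg] at h1
    have : g z ≤ 0 := by rw [hgzval]; nlinarith
    linarith [hg0 z hzA]
  set S : ℝ := ∑ i, α' i with hS
  have hSpos : 0 < S := by
    by_contra hSle
    push_neg at hSle
    have hS0 : S = 0 := le_antisymm hSle (Finset.sum_nonneg fun i _ => hα'nn i)
    have hall : ∀ i, α' i = 0 := by
      intro i
      have := (Finset.sum_eq_zero_iff_of_nonneg (fun i _ => hα'nn i)).mp hS0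
      exact this i (Finset.mem_univ i)
    have hz1 := hg0 _ (hmem x₀ hx₀ 1 one_pos)
    rw [hgz] at hz1
    simp [hall] at hz1
  -- key inequality
  have hkey : ∀ x ∈ Xad, ∑ i, α' i * f i xb ≤ ∑ i, α' i * f i x := by
    intro x hx
    set D : ℝ := ∑ i, α' i * (f i x - f i xb) with hD
    have hεpos : ∀ ε > (0:ℝ), 0 < D + ε * S := by
      intro ε hε
      have := hg0 _ (hmem x hx ε hε)
      rw [hgz] at this
      have heq : ∑ i, (f i x - f i xb + ε) * α' i = D + ε * S := by
        rw [hD, hS, Finset.mul_sum, ← Finset.sum_add_distrib]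
        exact Finset.sum_congr rfl fun i _ => by ring
      linarith [heq ▸ this]
    have hDnn : 0 ≤ D := by
      by_contra hDneg
      push_neg at hDneg
      have h2 := hεpos (-D / (2 * S)) (div_pos (by linarith) (by linarith))
      have h3 : -D / (2 * S) * S = -D / 2 := by field_simp
      rw [h3] at h2
      linarith
    have : ∑ i, α' i * f i x - ∑ i, α' i * f i xb = D := by
      rw [hD, ← Finset.sum_sub_distrib]
      exact Finset.sum_congr rfl fun i _ => by ring
    linarith
  refine ⟨fun i => α' i / S, fun i => div_nonneg (hα'nn i) hSpos.le, ?_, ?_⟩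
  · rw [← Finset.sum_div, ← hS, div_self hSpos.ne']
  · intro x hx
    have h1 : ∑ i, α' i / S * f i xb = (∑ i, α' i * f i xb) / S := by
      rw [Finset.sum_div]; exact Finset.sum_congr rfl fun i _ => by ring
    have h2 : ∑ i, α' i / S * f i x = (∑ i, α' i * f i x) / S := by
      rw [Finset.sum_div]; exact Finset.sum_congr rfl fun i _ => by ring
    rw [h1, h2]
    exact div_le_div_of_nonneg_right (hkey x hx) hSpos.le
end

section
/- Let c¹, c² ∈ ℝⁿ and define f : ℝⁿ → ℝ² by f(x) = (‖x − c¹‖₂², ‖x − c²‖₂²). Then x ∈ ℝⁿ lies in the segment conv({c¹, c²}) if and only if there is no point y ∈ ℝⁿ whose distances to c¹ and c² are both at most those of x, with at least one of the two distances strictly smaller; i.e., there is no y with ‖y − c¹‖₂ ≤ ‖x − c¹‖₂, ‖y − c²‖₂ ≤ ‖x − c²‖₂ and (‖y − c¹‖₂, ‖y − c²‖₂) ≠ (‖x − c¹‖₂, ‖x − c²‖₂). -/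
open RealInnerProductSpace


/-- For `c¹, c² ∈ ℝⁿ`, a point `x` lies in the segment
`conv({c¹, c²})` iff there is no `y` with `‖y − c¹‖ ≤ ‖x − c¹‖`,
`‖y − c²‖ ≤ ‖x − c²‖` and `(‖y − c¹‖, ‖y − c²‖) ≠ (‖x − c¹‖, ‖x − c²‖)`. -/
theorem segment_iff_no_dominating_point (n : ℕ) (c₁ c₂ : EuclideanSpace ℝ (Fin n))
    (x : EuclideanSpace ℝ (Fin n)) :
    x ∈ convexHull ℝ ({c₁, c₂} : Set (EuclideanSpace ℝ (Fin n))) ↔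
      ¬ ∃ y : EuclideanSpace ℝ (Fin n),
        ‖y - c₁‖ ≤ ‖x - c₁‖ ∧ ‖y - c₂‖ ≤ ‖x - c₂‖ ∧
        (‖y - c₁‖, ‖y - c₂‖) ≠ (‖x - c₁‖, ‖x - c₂‖) := by
  rw [convexHull_pair]
  have hdist : ∀ a b : EuclideanSpace ℝ (Fin n), ‖a - b‖ = dist a b := fun a b =>
    (dist_eq_norm a b).symm
  constructor
  · rintro hx ⟨y, h1, h2, hne⟩
    have hx' : dist c₁ x + dist x c₂ = dist c₁ c₂ := dist_add_dist_eq_iff.mpr (mem_segment_iff_wbtw.mp hx)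
    have htri : dist c₁ c₂ ≤ dist c₁ y + dist y c₂ := dist_triangle _ _ _
    simp only [hdist, dist_comm y c₁, dist_comm x c₁] at h1 h2
    have e1 : dist c₁ y = dist c₁ x := by linarith
    have e2 : dist y c₂ = dist x c₂ := by linarith
    apply hne
    rw [hdist, hdist, hdist, hdist, dist_comm y c₁, dist_comm x c₁, e1, e2]
  · intro h
    by_contra hx
    apply h
    set K := segment ℝ c₁ c₂ with hK
    have hKne : K.Nonempty := ⟨c₁, left_mem_segment _ _ _⟩
    have hKconv : Convex ℝ K := convex_segment _ _
    have hKcomp : IsComplete K :=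
      (by rw [hK, ← convexHull_pair (𝕜 := ℝ)]; exact (((Set.finite_singleton c₂).insert c₁).isCompact_convexHull ℝ).isClosed.isComplete)
    obtain ⟨y, hyK, hy⟩ := exists_norm_eq_iInf_of_complete_convex hKne hKcomp hKconv x
    have hvar : ∀ w ∈ K, ⟪x - y, w - y⟫ ≤ 0 :=
      (norm_eq_iInf_iff_real_inner_le_zero hKconv hyK).mp hy
    have key : ∀ z ∈ K, ‖y - z‖ ≤ ‖x - z‖ := by
      intro z hz
      have h1 : ⟪x - y, z - y⟫ ≤ 0 := hvar z hz
      have h2 : ‖x - z‖ ^ 2 = ‖(x - y) - (z - y)‖ ^ 2 := by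
        congr 1
        congr 1
        abel
      have h3 : ‖(x - y) - (z - y)‖ ^ 2 =
          ‖x - y‖ ^ 2 - 2 * ⟪x - y, z - y⟫ + ‖z - y‖ ^ 2 := by
        rw [norm_sub_sq_real]
      have h4 : ‖y - z‖ = ‖z - y‖ := norm_sub_rev _ _
      nlinarith [norm_nonneg (x - y), norm_nonneg (y - z), norm_nonneg (x - z),
        sq_nonneg (‖x - y‖)]
    refine ⟨y, key c₁ (left_mem_segment _ _ _), key c₂ (right_mem_segment _ _ _), ?_⟩
    intro heq
    apply hx
    have e1 : ‖y - c₁‖ = ‖x - c₁‖ := congrArg Prod.fst heq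
    have e2 : ‖y - c₂‖ = ‖x - c₂‖ := congrArg Prod.snd heq
    have hy' : dist c₁ y + dist y c₂ = dist c₁ c₂ := dist_add_dist_eq_iff.mpr (mem_segment_iff_wbtw.mp hyK)
    show x ∈ segment ℝ c₁ c₂
    rw [mem_segment_iff_wbtw, ← dist_add_dist_eq_iff]
    rw [dist_comm c₁ y, ← hdist, ← hdist, e1, e2, hdist, hdist] at hy'
    rwa [dist_comm c₁ x]
end

section
/- Let f : ℝⁿ → ℝᵏ have differentiable components and let x ∈ ℝⁿ be a point that is not Pareto critical, i.e., 0 ∉ conv({∇f₁(x), …, ∇f_k(x)}). Let v̄ be the element of minimal norm of −conv({∇f₁(x), …, ∇f_k(x)}). Then v̄ ≠ 0 and ⟨∇fᵢ(x), v̄⟩ ≤ −‖v̄‖₂² < 0 for every i ∈ {1,…,k}; in particular, v̄ is a common descent direction: for each i there exists t̄ᵢ > 0 such that fᵢ(x + t v̄) < fᵢ(x) for all t ∈ (0, t̄ᵢ). -/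
open scoped RealInnerProductSpace

-- variational inequality for min-norm point of convex set
lemma min_norm_inner {E : Type*} [NormedAddCommGroup E] [InnerProductSpace ℝ E]
    {C : Set E} (hC : Convex ℝ C) {v : E} (hv : v ∈ C)
    (hmin : ∀ w ∈ C, ‖v‖ ≤ ‖w‖) {w : E} (hw : w ∈ C) :
    ‖v‖ ^ 2 ≤ ⟪v, w⟫ := by
  have key : ∀ t : ℝ, 0 < t → t ≤ 1 → 0 ≤ 2 * ⟪v, w - v⟫ + t * ‖w - v‖ ^ 2 := by
    intro t ht ht1
    have hmem : v + t • (w - v) ∈ C := by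
      have := hC hv hw (by linarith : (0:ℝ) ≤ 1 - t) ht.le (by ring)
      convert this using 1
      simp [smul_sub]
      module
    have h1 : ‖v‖ ≤ ‖v + t • (w - v)‖ := hmin _ hmem
    have h2 : ‖v‖ ^ 2 ≤ ‖v + t • (w - v)‖ ^ 2 := by
      exact pow_le_pow_left₀ (norm_nonneg v) h1 2
    rw [norm_add_sq_real, norm_smul, inner_smul_right] at h2
    simp [Real.norm_eq_abs, abs_of_pos ht, mul_pow] at h2
    nlinarith
  have h0 : 0 ≤ 2 * ⟪v, w - v⟫ := by
    by_contra h
    push_neg at h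
    rcases eq_or_ne (‖w - v‖) 0 with hz | hz
    · have := key 1 one_pos le_rfl; rw [hz] at this; nlinarith
    · have hzpos : 0 < ‖w - v‖ ^ 2 := by positivity
      set ε := (-(2 * ⟪v, w - v⟫)) / (‖w - v‖ ^ 2) with hε
      have hεpos : 0 < ε := div_pos (by linarith) hzpos
      have := key (min ε 1 / 2) (by positivity) (by
        have : min ε 1 ≤ 1 := min_le_right _ _
        linarith)
      have hle : min ε 1 / 2 * ‖w - v‖ ^ 2 ≤ ε / 2 * ‖w - v‖ ^ 2 := by
        have : min ε 1 ≤ ε := min_le_left _ _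
        nlinarith
      have hεv : ε / 2 * ‖w - v‖ ^ 2 = -(2 * ⟪v, w - v⟫) / 2 := by
        field_simp [hε]
        rw [hε, div_mul_cancel₀ _ hzpos.ne']
      nlinarith
  have : ⟪v, w - v⟫ = ⟪v, w⟫ - ‖v‖ ^ 2 := by
    rw [inner_sub_right, real_inner_self_eq_norm_sq]
  linarith

/-- Let `f : ℝⁿ → ℝᵏ` have differentiable components and let `x`
be not Pareto critical, i.e. `0 ∉ conv({∇f₁(x), …, ∇f_k(x)})`. Let `vb` be the
minimal-norm element of `−conv({∇f₁(x), …, ∇f_k(x)})`. Then `vb ≠ 0`,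
`⟨∇fᵢ(x), vb⟩ ≤ −‖vb‖² < 0` for each `i`, and `vb` is a common descent
direction: for each `i` there is `t̄ᵢ > 0` with `fᵢ(x + t·vb) < fᵢ(x)` for all
`t ∈ (0, t̄ᵢ)`. -/
theorem steepest_descent_direction_noncritical (n k : ℕ)
    (f : Fin k → EuclideanSpace ℝ (Fin n) → ℝ)
    (hf : ∀ i, Differentiable ℝ (f i))
    (x : EuclideanSpace ℝ (Fin n))
    (hnotcrit : (0 : EuclideanSpace ℝ (Fin n)) ∉
      convexHull ℝ (Set.range fun i => gradient (f i) x))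
    (vb : EuclideanSpace ℝ (Fin n))
    (hmem : vb ∈ -(convexHull ℝ (Set.range fun i => gradient (f i) x)))
    (hmin : ∀ w ∈ -(convexHull ℝ (Set.range fun i => gradient (f i) x)), ‖vb‖ ≤ ‖w‖) :
    vb ≠ 0 ∧
    (∀ i, ⟪gradient (f i) x, vb⟫ ≤ -‖vb‖ ^ 2 ∧ -‖vb‖ ^ 2 < 0) ∧
    (∀ i, ∃ tb > (0 : ℝ), ∀ t : ℝ, 0 < t → t < tb → f i (x + t • vb) < f i x) := by
  set C := convexHull ℝ (Set.range fun i => gradient (f i) x) with hC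
  have hvne : vb ≠ 0 := by
    intro h
    apply hnotcrit
    rw [h] at hmem
    rw [Set.mem_neg] at hmem
    simpa using hmem
  have hconv : Convex ℝ (-C) := (convex_convexHull ℝ _).neg
  have hinner : ∀ i, ⟪gradient (f i) x, vb⟫ ≤ -‖vb‖ ^ 2 := by
    intro i
    have hgi : -(gradient (f i) x) ∈ -C := by
      simp only [Set.mem_neg, neg_neg]
      exact subset_convexHull ℝ _ ⟨i, rfl⟩
    have := min_norm_inner hconv hmem hmin hgi
    rw [inner_neg_right] at this
    have hsym : ⟪vb, gradient (f i) x⟫ = ⟪gradient (f i) x, vb⟫ := real_inner_comm _ _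
    linarith [this, hsym.le, hsym.ge]
  have hnormpos : -‖vb‖ ^ 2 < 0 := by
    have : 0 < ‖vb‖ := norm_pos_iff.mpr hvne
    nlinarith
  refine ⟨hvne, fun i => ⟨hinner i, hnormpos⟩, fun i => ?_⟩
  -- derivative of g t = f i (x + t • vb) at 0 is ⟪grad, vb⟫ < 0
  set g : ℝ → ℝ := fun t => f i (x + t • vb) with hg
  have hL : HasDerivAt (fun t : ℝ => x + t • vb) vb 0 := by
    simpa using ((hasDerivAt_id (0:ℝ)).smul_const vb).const_add x
  have hfd : HasFDerivAt (f i) (InnerProductSpace.toDual ℝ _ (gradient (f i) x)) x :=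
    ((hf i).differentiableAt.hasGradientAt).hasFDerivAt
  have hfd' : HasFDerivAt (f i) (InnerProductSpace.toDual ℝ _ (gradient (f i) x))
      (x + (0:ℝ) • vb) := by simpa using hfd
  have hgd : HasDerivAt g ⟪gradient (f i) x, vb⟫ 0 := by
    have := hfd'.comp_hasDerivAt 0 hL
    exact this
  have hneg : ⟪gradient (f i) x, vb⟫ < 0 := lt_of_le_of_lt (hinner i) hnormpos
  -- slope argument
  have hslope := hgd.hasDerivWithinAt (s := Set.Ioi (0:ℝ))
  rw [hasDerivWithinAt_iff_tendsto_slope] at hslope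
  have hev : ∀ᶠ t in nhdsWithin (0:ℝ) (Set.Ioi 0 \ {0}), slope g 0 t < 0 :=
    hslope.eventually_lt_const hneg
  have hset : Set.Ioi (0:ℝ) \ {0} = Set.Ioi 0 := by
    ext t; simp (config := {contextual := true}) [lt_irrefl, ne_of_gt]
  rw [hset, Filter.eventually_iff, mem_nhdsGT_iff_exists_Ioo_subset] at hev
  rcases hev with ⟨tb, htb, hsub⟩
  refine ⟨tb, htb, fun t ht htb' => ?_⟩
  have := hsub ⟨ht, htb'⟩
  simp only [Set.mem_setOf_eq, slope_def_field] at this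
  have hg0 : g 0 = f i x := by simp [g]
  have hgt : g t < g 0 := by
    have hdiv : (g t - g 0) / t < 0 := by simpa using this
    by_contra h
    push_neg at h
    have : 0 ≤ (g t - g 0) / t := div_nonneg (by linarith) ht.le
    linarith
  exact hg0 ▸ hgt
end
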